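/- arXiv:2102.11564 — 2 statements merged into one kernel-verified Lean document; each statement's English description precedes it below -/
import Mathlib

section
/- Let P be the cubic Hermite interpolant on [x_i, x_{i+1}] of the data (f_i, ḟ_i), (f_{i+1}, ḟ_{i+1}), suppose m_i ≠ 0, and set α_i = ḟ_i/m_i and β_i = ḟ_{i+1}/m_i. If 0 ≤ α_i ≤ 3 and 0 ≤ β_i ≤ 3, then P is monotone on [x_i, x_{i+1}]: nondecreasing if m_i > 0 and nonincreasing if m_i < 0. -/
/-! Writing `h = xᵢ₊₁ - xᵢ` and `u = t - xᵢ`, the derivative of the Hermite cubic is `m / h²` times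
the quadratic `α (h - u)² + 2 (3 - α - β) u (h - u) + β u²` in the Bernstein basis of `[0, h]`, so it
has the sign of `m` wherever this quadratic is nonnegative. The quadratic is affine in `(α, β)`, hence
on the square `[0, 3]²` it is the bilinear interpolation of its values at the four corners,
`6 u (h - u)`, `3 (h - u)²`, `3 u²` and `3 (h - 2u)²`, all nonnegative for `0 ≤ u ≤ h`. -/

/-- The cubic Hermite interpolant on `[xi, xip]` of the data
`(fi, di)`, `(fip, dip)` (values and derivatives at the endpoints). -/
noncomputable def hermite (xi xip fi fip di dip : ℝ) : ℝ → ℝ := fun t =>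
  fi + di * (t - xi)
    + (((fip - fi) / (xip - xi) - di) / (xip - xi)) * (t - xi) ^ 2
    + ((dip + di - 2 * ((fip - fi) / (xip - xi))) / (xip - xi) ^ 2)
        * (t - xi) ^ 2 * (t - xip)

theorem hasDerivAt_hermite {xi xip : ℝ} (hx : xi ≠ xip) (fi fip di dip t : ℝ) :
    HasDerivAt (hermite xi xip fi fip di dip)
      ((di * (xip - t) ^ 2 + 2 * (3 * ((fip - fi) / (xip - xi)) - di - dip) * (t - xi) * (xip - t)
        + dip * (t - xi) ^ 2) / (xip - xi) ^ 2) t := by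
  have hh : xip - xi ≠ 0 := sub_ne_zero.2 hx.symm
  have hu : HasDerivAt (fun s => s - xi) 1 t := (hasDerivAt_id t).sub_const xi
  have hw : HasDerivAt (fun s => s - xip) 1 t := (hasDerivAt_id t).sub_const xip
  set m := (fip - fi) / (xip - xi)
  have := (((hu.const_mul di).const_add fi).add ((hu.fun_pow 2).const_mul ((m - di) / (xip - xi)))).add
    (((hu.fun_pow 2).const_mul ((dip + di - 2 * m) / (xip - xi) ^ 2)).fun_mul hw)
  refine HasDerivAt.congr_deriv (f := hermite xi xip fi fip di dip) this ?_
  field_simp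
  ring

theorem bernstein_quadratic_nonneg {α β u h : ℝ} (hα₀ : 0 ≤ α) (hα₃ : α ≤ 3) (hβ₀ : 0 ≤ β)
    (hβ₃ : β ≤ 3) (hu : 0 ≤ u) (huh : u ≤ h) :
    0 ≤ α * (h - u) ^ 2 + 2 * (3 - α - β) * u * (h - u) + β * u ^ 2 := by
  have hα₃' : 0 ≤ 3 - α := by linarith
  have hβ₃' : 0 ≤ 3 - β := by linarith
  have hv : 0 ≤ h - u := by linarith
  have corners : 3 * (α * (h - u) ^ 2 + 2 * (3 - α - β) * u * (h - u) + β * u ^ 2)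
      = 2 * ((3 - α) * (3 - β)) * (u * (h - u)) + α * (3 - β) * (h - u) ^ 2
        + (3 - α) * β * u ^ 2 + α * β * (h - 2 * u) ^ 2 := by ring
  have := mul_nonneg (mul_nonneg hα₃' hβ₃') (mul_nonneg hu hv)
  have := mul_nonneg (mul_nonneg hα₀ hβ₃') (sq_nonneg (h - u))
  have := mul_nonneg (mul_nonneg hα₃' hβ₀) (sq_nonneg u)
  have := mul_nonneg (mul_nonneg hα₀ hβ₀) (sq_nonneg (h - 2 * u))
  linarith

theorem slope_mul_deriv_hermite_nonneg {xi xip fi fip di dip m t : ℝ} (hx : xi < xip)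
    (hm : m = (fip - fi) / (xip - xi)) (hm0 : m ≠ 0)
    (hα₀ : 0 ≤ di / m) (hα₃ : di / m ≤ 3) (hβ₀ : 0 ≤ dip / m) (hβ₃ : dip / m ≤ 3)
    (ht : t ∈ Set.Icc xi xip) :
    0 ≤ m * deriv (hermite xi xip fi fip di dip) t := by
  have hh : xip - xi ≠ 0 := sub_ne_zero.2 hx.ne'
  have hE := bernstein_quadratic_nonneg hα₀ hα₃ hβ₀ hβ₃ (sub_nonneg.2 ht.1)
    (sub_le_sub_right ht.2 xi)
  rw [(hasDerivAt_hermite hx.ne fi fip di dip t).deriv, ← hm]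
  calc
    0 ≤ m ^ 2 * (di / m * ((xip - xi) - (t - xi)) ^ 2
          + 2 * (3 - di / m - dip / m) * (t - xi) * ((xip - xi) - (t - xi))
          + dip / m * (t - xi) ^ 2) / (xip - xi) ^ 2 :=
      div_nonneg (mul_nonneg (sq_nonneg m) hE) (sq_nonneg _)
    _ = _ := by
      field_simp
      ring

/-- Sufficient conditions (de Boor–Swartz) for monotonicity of a cubic
Hermite interpolant: if `0 ≤ α = ḟᵢ/mᵢ ≤ 3` and `0 ≤ β = ḟᵢ₊₁/mᵢ ≤ 3`,
the interpolant is monotone on `[xᵢ, xᵢ₊₁]`. -/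
theorem hermite_monotone_sufficient (xi xip fi fip di dip m : ℝ) (hx : xi < xip)
    (hm : m = (fip - fi) / (xip - xi)) (hm0 : m ≠ 0)
    (hα0 : 0 ≤ di / m) (hα3 : di / m ≤ 3)
    (hβ0 : 0 ≤ dip / m) (hβ3 : dip / m ≤ 3) :
    (0 < m → MonotoneOn (hermite xi xip fi fip di dip) (Set.Icc xi xip)) ∧
    (m < 0 → AntitoneOn (hermite xi xip fi fip di dip) (Set.Icc xi xip)) := by
  have hP : Differentiable ℝ (hermite xi xip fi fip di dip) := fun t =>
    (hasDerivAt_hermite hx.ne fi fip di dip t).differentiableAt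
  have hsign : ∀ t ∈ interior (Set.Icc xi xip), 0 ≤ m * deriv (hermite xi xip fi fip di dip) t :=
    fun t ht => slope_mul_deriv_hermite_nonneg hx hm hm0 hα0 hα3 hβ0 hβ3 (interior_subset ht)
  refine ⟨fun hpos => ?_, fun hneg => ?_⟩
  · exact monotoneOn_of_deriv_nonneg (convex_Icc xi xip) hP.continuous.continuousOn
      hP.differentiableOn fun t ht => nonneg_of_mul_nonneg_right (hsign t ht) hpos
  · exact antitoneOn_of_deriv_nonpos (convex_Icc xi xip) hP.continuous.continuousOn
      hP.differentiableOn fun t ht => nonpos_of_mul_nonneg_right (hsign t ht) hneg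
end

section
/- Assume ĥ < 1, f is four times continuously differentiable on [x_1, x_{i_0}] with |f⁽⁴⁾(x)| ≤ L there, there exists K > 0 with ĥ/h_j ≤ K for all 1 ≤ j ≤ i_0 − 1, and i_0 > 3 − log₂(ĥ). Let f̃_{i_0} satisfy |f'(x_{i_0}) − f̃_{i_0}| ≤ T·ĥ^{p} with T, p > 0, and let ḟ_2, …, ḟ_{i_0−1} solve the left subsystem. Then there exists a constant C depending only on K, L and T such that, with l_0 := ⌊(i_0 − 2) + log₂(ĥ)⌋ + 1: |ḟ_i − f'(x_i)| ≤ C·ĥ^{min(3, p+1)} for all 2 ≤ i ≤ l_0, and |ḟ_i − f'(x_i)| ≤ C·ĥ^{min(3, p)} for all l_0 < i ≤ i_0 − 1. -/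
/-!
The errors `eᵢ = ḟᵢ − f'(xᵢ)` solve the same tridiagonal system, with right-hand side the local
truncation error of the spline relation at `xᵢ`; Taylor expansion about `xᵢ` bounds it by `L ĥ³`,
since the relation is exact on cubics. The matrix has positive weights with `λᵢ + μᵢ = 1 < 2`, so a
discrete maximum principle bounds `|eᵢ|` by the comparison function `L ĥ³ + 2Tĥᵖ·2^(i − i₀)`:
the boundary error `Tĥᵖ` at `i₀` is halved at every step to the left, and is below `Tĥᵖ⁺¹` once
`i ≤ l₀`.
-/

/-- Mesh spacing `hᵢ = xᵢ₊₁ − xᵢ`. -/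
noncomputable def hstep (x : ℕ → ℝ) (i : ℕ) : ℝ := x (i + 1) - x i

/-- Divided difference `mᵢ = (f(xᵢ₊₁) − f(xᵢ))/hᵢ`. -/
noncomputable def mslope (x : ℕ → ℝ) (f : ℝ → ℝ) (i : ℕ) : ℝ :=
  (f (x (i + 1)) - f (x i)) / (x (i + 1) - x i)

/-- `λᵢ = hᵢ₊₁/(hᵢ + hᵢ₊₁)`. -/
noncomputable def lamb (x : ℕ → ℝ) (i : ℕ) : ℝ :=
  hstep x (i + 1) / (hstep x i + hstep x (i + 1))

/-- `μᵢ = hᵢ/(hᵢ + hᵢ₊₁)`. -/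
noncomputable def mub (x : ℕ → ℝ) (i : ℕ) : ℝ :=
  hstep x i / (hstep x i + hstep x (i + 1))

open Set
open scoped Nat

section Taylor

variable {s : Set ℝ} {M a b : ℝ}

theorem norm_sub_taylorWithinEval_le {E : Type*} [NormedAddCommGroup E] [NormedSpace ℝ E]
    {f : ℝ → E} {n : ℕ} (hs : Convex ℝ s) (hsu : UniqueDiffOn ℝ s) (hf : ContDiffOn ℝ (n + 1) f s)
    (hM : ∀ t ∈ s, ‖iteratedDerivWithin (n + 1) f s t‖ ≤ M) (ha : a ∈ s) (hb : b ∈ s) :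
    ‖f b - taylorWithinEval f n s a b‖ ≤ M * |b - a| ^ (n + 1) / n ! := by
  have hab : uIcc a b ⊆ s := by rw [← segment_eq_uIcc]; exact hs.segment_subset ha hb
  have hderiv : ∀ t ∈ uIcc a b, HasDerivWithinAt (fun t => taylorWithinEval f n s t b)
      (((n ! : ℝ)⁻¹ * (b - t) ^ n) • iteratedDerivWithin (n + 1) f s t) (uIcc a b) t :=
    fun t ht => (hasDerivWithinAt_taylorWithinEval hsu self_mem_nhdsWithin (hab ht) subset_rfl
      (hf.of_le (by norm_cast; omega))
      (hf.differentiableOn_iteratedDerivWithin (by norm_cast; omega) hsu t (hab ht))).mono hab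
  have hbound : ∀ t ∈ uIcc a b,
      ‖((n ! : ℝ)⁻¹ * (b - t) ^ n) • iteratedDerivWithin (n + 1) f s t‖
        ≤ (n ! : ℝ)⁻¹ * |b - a| ^ n * M := by
    intro t ht
    rw [norm_smul, Real.norm_eq_abs, abs_mul, abs_pow, abs_of_pos (by positivity)]
    have hdist : |b - t| ^ n ≤ |b - a| ^ n :=
      pow_le_pow_left₀ (abs_nonneg _) (abs_sub_right_of_mem_uIcc ht) n
    exact mul_le_mul (by gcongr) (hM t (hab ht)) (norm_nonneg _) (by positivity)
  have hmvt := Convex.norm_image_sub_le_of_norm_hasDerivWithin_le hderiv hbound (convex_uIcc a b)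
    left_mem_uIcc right_mem_uIcc
  rw [taylorWithinEval_self, Real.norm_eq_abs] at hmvt
  exact hmvt.trans_eq (by field_simp; ring)

variable {f : ℝ → ℝ}

theorem abs_sub_taylor_cubic_le (hs : Convex ℝ s) (hsu : UniqueDiffOn ℝ s)
    (hf : ContDiffOn ℝ 4 f s) (hM : ∀ t ∈ s, |iteratedDerivWithin 4 f s t| ≤ M)
    (ha : a ∈ s) (hb : b ∈ s) :
    |f b - (f a + derivWithin f s a * (b - a) + iteratedDerivWithin 2 f s a * (b - a) ^ 2 / 2
      + iteratedDerivWithin 3 f s a * (b - a) ^ 3 / 6)| ≤ M * |b - a| ^ 4 / 6 := by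
  convert norm_sub_taylorWithinEval_le (n := 3) hs hsu hf hM ha hb using 2
  · simp only [Real.norm_eq_abs, taylor_within_apply, Finset.sum_range_succ,
      Finset.sum_range_zero, smul_eq_mul, iteratedDerivWithin_zero, iteratedDerivWithin_one,
      Nat.factorial]
    push_cast
    congr 1
    ring
  · norm_num [Nat.factorial]

theorem abs_derivWithin_sub_taylor_quadratic_le (hs : Convex ℝ s) (hsu : UniqueDiffOn ℝ s)
    (hf : ContDiffOn ℝ 4 f s) (hM : ∀ t ∈ s, |iteratedDerivWithin 4 f s t| ≤ M)
    (ha : a ∈ s) (hb : b ∈ s) :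
    |derivWithin f s b - (derivWithin f s a + iteratedDerivWithin 2 f s a * (b - a)
      + iteratedDerivWithin 3 f s a * (b - a) ^ 2 / 2)| ≤ M * |b - a| ^ 3 / 2 := by
  have hM' : ∀ t ∈ s, ‖iteratedDerivWithin 3 (derivWithin f s) s t‖ ≤ M := by
    simp only [← iteratedDerivWithin_succ', Real.norm_eq_abs]
    exact hM
  convert norm_sub_taylorWithinEval_le (n := 2) hs hsu (hf.derivWithin hsu (by norm_num)) hM'
    ha hb using 2
  · simp only [Real.norm_eq_abs, taylor_within_apply, Finset.sum_range_succ,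
      Finset.sum_range_zero, smul_eq_mul, ← iteratedDerivWithin_succ', zero_add,
      iteratedDerivWithin_one, Nat.factorial]
    push_cast
    congr 1
    ring
  · norm_num [Nat.factorial]

end Taylor

section Weights

variable {x : ℕ → ℝ} {j : ℕ}

theorem lamb_nonneg (h0 : 0 ≤ hstep x j) (h1 : 0 ≤ hstep x (j + 1)) : 0 ≤ lamb x j :=
  div_nonneg h1 (add_nonneg h0 h1)

theorem mub_nonneg (h0 : 0 ≤ hstep x j) (h1 : 0 ≤ hstep x (j + 1)) : 0 ≤ mub x j :=
  div_nonneg h0 (add_nonneg h0 h1)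

theorem lamb_add_mub (h : hstep x j + hstep x (j + 1) ≠ 0) : lamb x j + mub x j = 1 := by
  rw [lamb, mub, ← add_div, add_comm, div_self h]

end Weights

theorem abs_spline_residual_le {f : ℝ → ℝ} {s : Set ℝ} {x : ℕ → ℝ} {M δ : ℝ} {j : ℕ}
    (hs : Convex ℝ s) (hsu : UniqueDiffOn ℝ s) (hf : ContDiffOn ℝ 4 f s)
    (hM : ∀ t ∈ s, |iteratedDerivWithin 4 f s t| ≤ M)
    (hx₀ : x j ∈ s) (hx₁ : x (j + 1) ∈ s) (hx₂ : x (j + 2) ∈ s)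
    (h₀ : 0 < hstep x j) (h₁ : 0 < hstep x (j + 1))
    (hδ₀ : hstep x j ≤ δ) (hδ₁ : hstep x (j + 1) ≤ δ) :
    |lamb x j * derivWithin f s (x j) + 2 * derivWithin f s (x (j + 1))
        + mub x j * derivWithin f s (x (j + 2))
        - 3 * (lamb x j * mslope x f j + mub x j * mslope x f (j + 1))| ≤ M * δ ^ 3 := by
  set h := hstep x j
  set H := hstep x (j + 1)
  set d := derivWithin f s
  set f₂ := iteratedDerivWithin 2 f s (x (j + 1))
  set f₃ := iteratedDerivWithin 3 f s (x (j + 1))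
  have hM0 : 0 ≤ M := (abs_nonneg _).trans (hM _ hx₁)
  have hlam : 0 ≤ lamb x j := lamb_nonneg h₀.le h₁.le
  have hmu : 0 ≤ mub x j := mub_nonneg h₀.le h₁.le
  have hsum : lamb x j + mub x j = 1 := lamb_add_mub (by positivity)
  have hxa : x j - x (j + 1) = -h := by simp only [h, hstep]; ring
  have hxc : x (j + 2) - x (j + 1) = H := rfl
  set ρ₀ := f (x j) - (f (x (j + 1)) + d (x (j + 1)) * (-h) + f₂ * (-h) ^ 2 / 2
    + f₃ * (-h) ^ 3 / 6)
  set ρ₂ := f (x (j + 2)) - (f (x (j + 1)) + d (x (j + 1)) * H + f₂ * H ^ 2 / 2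
    + f₃ * H ^ 3 / 6)
  set σ₀ := d (x j) - (d (x (j + 1)) + f₂ * (-h) + f₃ * (-h) ^ 2 / 2)
  set σ₂ := d (x (j + 2)) - (d (x (j + 1)) + f₂ * H + f₃ * H ^ 2 / 2)
  have hρ₀ : |ρ₀| ≤ M * h ^ 4 / 6 := by
    have := abs_sub_taylor_cubic_le hs hsu hf hM hx₁ hx₀
    rwa [hxa, abs_neg, abs_of_pos h₀] at this
  have hρ₂ : |ρ₂| ≤ M * H ^ 4 / 6 := by
    have := abs_sub_taylor_cubic_le hs hsu hf hM hx₁ hx₂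
    rwa [hxc, abs_of_pos h₁] at this
  have hσ₀ : |σ₀| ≤ M * h ^ 3 / 2 := by
    have := abs_derivWithin_sub_taylor_quadratic_le hs hsu hf hM hx₁ hx₀
    rwa [hxa, abs_neg, abs_of_pos h₀] at this
  have hσ₂ : |σ₂| ≤ M * H ^ 3 / 2 := by
    have := abs_derivWithin_sub_taylor_quadratic_le hs hsu hf hM hx₁ hx₂
    rwa [hxc, abs_of_pos h₁] at this
  -- the Taylor polynomials about `x (j + 1)` cancel since `λ h = μ H` and `λ + μ = 1`
  have hres : lamb x j * d (x j) + 2 * d (x (j + 1)) + mub x j * d (x (j + 2))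
      - 3 * (lamb x j * mslope x f j + mub x j * mslope x f (j + 1))
      = lamb x j * σ₀ + mub x j * σ₂ + 3 * lamb x j * ρ₀ / h - 3 * mub x j * ρ₂ / H := by
    have hlamb : lamb x j = H / (h + H) := rfl
    have hmub : mub x j = h / (h + H) := rfl
    have hm₀ : mslope x f j = (f (x (j + 1)) - f (x j)) / h := rfl
    have hm₁ : mslope x f (j + 1) = (f (x (j + 2)) - f (x (j + 1))) / H := rfl
    rw [hlamb, hmub, hm₀, hm₁]
    field_simp
    ring
  rw [hres]
  calc _ ≤ |lamb x j * σ₀| + |mub x j * σ₂| + |3 * lamb x j * ρ₀ / h| + |3 * mub x j * ρ₂ / H| :=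
        (abs_sub _ _).trans (by gcongr; exact abs_add_three _ _ _)
    _ = lamb x j * |σ₀| + mub x j * |σ₂| + 3 * lamb x j * |ρ₀| / h + 3 * mub x j * |ρ₂| / H := by
        simp only [abs_mul, abs_div, abs_of_nonneg hlam, abs_of_nonneg hmu, abs_of_pos h₀,
          abs_of_pos h₁, abs_of_pos (three_pos : (0 : ℝ) < 3)]
    _ ≤ lamb x j * (M * h ^ 3 / 2) + mub x j * (M * H ^ 3 / 2)
        + 3 * lamb x j * (M * h ^ 4 / 6) / h + 3 * mub x j * (M * H ^ 4 / 6) / H := by gcongr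
    _ = M * (lamb x j * h ^ 3 + mub x j * H ^ 3) := by field_simp; ring
    _ ≤ M * (lamb x j * δ ^ 3 + mub x j * δ ^ 3) := by gcongr
    _ = M * δ ^ 3 := by rw [← add_mul, hsum, one_mul]

-- Discrete maximum principle: by diagonal dominance `a + b < 2`, `|e| - B` has no positive
-- maximum at an interior node.
theorem abs_le_of_tridiagonal_residual_le {N i : ℕ} {a b r e B : ℕ → ℝ}
    (ha : ∀ k, 1 ≤ k → k + 2 ≤ N → 0 ≤ a k) (hb : ∀ k, 1 ≤ k → k + 2 ≤ N → 0 ≤ b k)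
    (hab : ∀ k, 1 ≤ k → k + 2 ≤ N → a k + b k < 2)
    (he : ∀ k, 1 ≤ k → k + 2 ≤ N → |a k * e k + 2 * e (k + 1) + b k * e (k + 2)| ≤ r k)
    (hB : ∀ k, 1 ≤ k → k + 2 ≤ N → r k + a k * B k + b k * B (k + 2) ≤ 2 * B (k + 1))
    (h₁ : |e 1| ≤ B 1) (hN : |e N| ≤ B N) (hi₁ : 1 ≤ i) (hiN : i ≤ N) : |e i| ≤ B i := by
  obtain ⟨m, hm, hmax⟩ := (Finset.Icc 1 N).exists_max_image (fun j => |e j| - B j)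
    ⟨i, Finset.mem_Icc.2 ⟨hi₁, hiN⟩⟩
  suffices |e m| - B m ≤ 0 by linarith [hmax i (Finset.mem_Icc.2 ⟨hi₁, hiN⟩)]
  by_contra! hψ
  set ψ := |e m| - B m
  obtain ⟨hm₁, hmN⟩ := Finset.mem_Icc.1 hm
  obtain ⟨k, rfl⟩ : ∃ k, m = k + 1 := ⟨m - 1, by omega⟩
  have hk₁ : 1 ≤ k := by
    by_contra; obtain rfl : k = 0 := by omega
    linarith
  have hkN : k + 2 ≤ N := by
    by_contra; obtain rfl : N = k + 1 := by omega
    linarith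
  have hnb : ∀ j, 1 ≤ j → j ≤ N → |e j| ≤ B j + ψ := fun j h1 h2 => by
    linarith [hmax j (Finset.mem_Icc.2 ⟨h1, h2⟩)]
  have hrow : 2 * |e (k + 1)| ≤ r k + a k * |e k| + b k * |e (k + 2)| :=
    calc 2 * |e (k + 1)| = |2 * e (k + 1)| := by rw [abs_mul, abs_two]
      _ = |(a k * e k + 2 * e (k + 1) + b k * e (k + 2)) - a k * e k - b k * e (k + 2)| := by
          congr 1; ring
      _ ≤ |a k * e k + 2 * e (k + 1) + b k * e (k + 2)| + |a k * e k| + |b k * e (k + 2)| :=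
          (abs_sub _ _).trans (by gcongr; exact abs_sub _ _)
      _ ≤ r k + a k * |e k| + b k * |e (k + 2)| := by
          rw [abs_mul, abs_mul, abs_of_nonneg (ha k hk₁ hkN), abs_of_nonneg (hb k hk₁ hkN)]
          gcongr
          exact he k hk₁ hkN
  have hlo := mul_le_mul_of_nonneg_left (hnb k hk₁ (by omega)) (ha k hk₁ hkN)
  have hhi := mul_le_mul_of_nonneg_left (hnb (k + 2) (by omega) hkN) (hb k hk₁ hkN)
  nlinarith [hB k hk₁ hkN, hab k hk₁ hkN]

theorem two_pow_barrier_le {lam mu R c : ℝ} (hlam : 0 ≤ lam) (hsum : lam + mu = 1) (hc : 0 ≤ c)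
    (k : ℕ) : R + lam * (R + c * 2 ^ k) + mu * (R + c * 2 ^ (k + 2))
      ≤ 2 * (R + c * 2 ^ (k + 1)) := by
  obtain rfl : mu = 1 - lam := by linarith
  have : 0 ≤ lam * c * 2 ^ k := by positivity
  linear_combination 3 * this

theorem abs_sub_derivWithin_le_of_spline_rows {x : ℕ → ℝ} {f : ℝ → ℝ} {df : ℕ → ℝ} {N i : ℕ}
    {M δ ε : ℝ} (h2N : 2 ≤ N) (hx : ∀ j, 1 ≤ j → j < N → x j < x (j + 1))
    (hδ : ∀ j, 1 ≤ j → j < N → hstep x j ≤ δ) (hf : ContDiffOn ℝ 4 f (Icc (x 1) (x N)))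
    (hM : ∀ t ∈ Icc (x 1) (x N), |iteratedDerivWithin 4 f (Icc (x 1) (x N)) t| ≤ M)
    (h₁ : df 1 = derivWithin f (Icc (x 1) (x N)) (x 1))
    (hN : |df N - derivWithin f (Icc (x 1) (x N)) (x N)| ≤ ε)
    (hrows : ∀ j, 2 ≤ j → j ≤ N - 1 →
      lamb x (j - 1) * df (j - 1) + 2 * df j + mub x (j - 1) * df (j + 1)
        = 3 * (lamb x (j - 1) * mslope x f (j - 1) + mub x (j - 1) * mslope x f j))
    (hi₁ : 1 ≤ i) (hiN : i ≤ N) :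
    |df i - derivWithin f (Icc (x 1) (x N)) (x i)| ≤ M * δ ^ 3 + ε * 2 ^ (i + 1) / 2 ^ N := by
  set D := Icc (x 1) (x N)
  set e : ℕ → ℝ := fun j => df j - derivWithin f D (x j)
  have hmono : StrictMonoOn x (Icc 1 N) :=
    strictMonoOn_of_lt_succ ordConnected_Icc fun j _ hj hj' => hx j hj.1 hj'.2
  have hmem : ∀ j, 1 ≤ j → j ≤ N → x j ∈ D := fun j h1 h2 =>
    ⟨hmono.monotoneOn ⟨le_rfl, h1.trans h2⟩ ⟨h1, h2⟩ h1,
      hmono.monotoneOn ⟨h1, h2⟩ ⟨h1.trans h2, le_rfl⟩ h2⟩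
  have hD : UniqueDiffOn ℝ D := uniqueDiffOn_Icc (hmono ⟨le_rfl, by omega⟩ ⟨by omega, le_rfl⟩ h2N)
  have hpos : ∀ j, 1 ≤ j → j < N → 0 < hstep x j := fun j h1 h2 => sub_pos.2 (hx j h1 h2)
  have hM0 : 0 ≤ M := (abs_nonneg _).trans (hM _ (hmem 1 le_rfl (by omega)))
  have hδ0 : 0 ≤ δ := (hpos 1 le_rfl h2N).le.trans (hδ 1 le_rfl h2N)
  have hε : 0 ≤ ε := (abs_nonneg _).trans hN
  have hweights : ∀ k, 1 ≤ k → k + 2 ≤ N →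
      0 ≤ lamb x k ∧ 0 ≤ mub x k ∧ lamb x k + mub x k = 1 := fun k h1 h2 =>
    have h₀ := hpos k h1 (by omega)
    have h₁ := hpos (k + 1) (by omega) (by omega)
    ⟨lamb_nonneg h₀.le h₁.le, mub_nonneg h₀.le h₁.le, lamb_add_mub (by positivity)⟩
  have hres : ∀ k, 1 ≤ k → k + 2 ≤ N →
      |lamb x k * e k + 2 * e (k + 1) + mub x k * e (k + 2)| ≤ M * δ ^ 3 := fun k h1 h2 => by
    have hrow := hrows (k + 1) (by omega) (by omega)
    simp only [Nat.add_sub_cancel] at hrow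
    calc _ = |lamb x k * derivWithin f D (x k) + 2 * derivWithin f D (x (k + 1))
          + mub x k * derivWithin f D (x (k + 2))
          - 3 * (lamb x k * mslope x f k + mub x k * mslope x f (k + 1))| := by
          rw [abs_sub_comm]; congr 1; linear_combination hrow
      _ ≤ M * δ ^ 3 := abs_spline_residual_le (convex_Icc _ _) hD hf hM (hmem k h1 (by omega))
          (hmem (k + 1) (by omega) (by omega)) (hmem (k + 2) (by omega) h2)
          (hpos k h1 (by omega)) (hpos (k + 1) (by omega) (by omega))
          (hδ k h1 (by omega)) (hδ (k + 1) (by omega) (by omega))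
  have hc : 0 ≤ 2 * ε / 2 ^ N := by positivity
  refine (abs_le_of_tridiagonal_residual_le (r := fun _ => M * δ ^ 3) (e := e)
    (B := fun j => M * δ ^ 3 + 2 * ε / 2 ^ N * 2 ^ j)
    (fun k h1 h2 => (hweights k h1 h2).1) (fun k h1 h2 => (hweights k h1 h2).2.1)
    (fun k h1 h2 => by linarith [(hweights k h1 h2).2.2]) hres
    (fun k h1 h2 => two_pow_barrier_le (hweights k h1 h2).1 (hweights k h1 h2).2.2 hc k)
    ?_ ?_ hi₁ hiN).trans_eq (by ring)
  · simp only [e, h₁, sub_self, abs_zero]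
    positivity
  · have hcancel : 2 * ε / 2 ^ N * 2 ^ N = 2 * ε := div_mul_cancel₀ _ (by positivity)
    simp only [hcancel]
    linarith [mul_nonneg hM0 (pow_nonneg hδ0 3)]

theorem two_pow_succ_le_of_le_floor_logb {i N : ℕ} {h : ℝ} (hh : 0 < h)
    (hi : (i : ℤ) ≤ ⌊(N : ℝ) - 2 + Real.logb 2 h⌋ + 1) : (2 : ℝ) ^ (i + 1) ≤ 2 ^ N * h := by
  have hle : ((i + 1 : ℕ) : ℝ) ≤ N + Real.logb 2 h := by
    have := Int.le_floor.1 (show (i : ℤ) - 1 ≤ ⌊(N : ℝ) - 2 + Real.logb 2 h⌋ by omega)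
    push_cast at this ⊢
    linarith
  calc (2 : ℝ) ^ (i + 1) = 2 ^ ((i + 1 : ℕ) : ℝ) := (Real.rpow_natCast 2 _).symm
    _ ≤ 2 ^ ((N : ℝ) + Real.logb 2 h) := Real.rpow_le_rpow_of_exponent_le one_le_two hle
    _ = 2 ^ N * h := by
      rw [Real.rpow_add two_pos, Real.rpow_natCast, Real.rpow_logb two_pos one_lt_two.ne' hh]

theorem add_mul_rpow_le_mul_rpow_min {A T h q : ℝ} (hA : 0 ≤ A) (hT : 0 ≤ T) (h₀ : 0 < h)
    (h₁ : h ≤ 1) : A * h ^ 3 + T * h ^ q ≤ (A + T) * h ^ min 3 q := by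
  have h3 : h ^ 3 ≤ h ^ min 3 q := by
    rw [← Real.rpow_natCast]
    exact Real.rpow_le_rpow_of_exponent_ge h₀ h₁ (by simp)
  have hq : h ^ q ≤ h ^ min 3 q := Real.rpow_le_rpow_of_exponent_ge h₀ h₁ (min_le_right _ _)
  rw [add_mul]
  gcongr

-- The system `A_{i₀⁻}·Ḟ = B_{i₀⁻}` is written row by row, with the boundary values `ḟ₁ = f'(x₁)`
-- and `ḟ_{i₀} = f̃_{i₀}` stored in `df 1` and `df i0`.
theorem left_subsystem_accuracy_general (K L T : ℝ) (hT : 0 < T) :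
    ∃ C > 0, ∀ (p : ℝ), 0 < p →
      ∀ (n i0 : ℕ) (x : ℕ → ℝ) (f : ℝ → ℝ) (ftil hhat : ℝ) (df : ℕ → ℝ),
      3 ≤ i0 → i0 ≤ n - 1 →
      (∀ i, 1 ≤ i → i ≤ n - 1 → x i < x (i + 1)) →
      hhat < 1 →
      (∀ i, 1 ≤ i → i ≤ n - 1 → hstep x i ≤ hhat) →
      (∃ i, 1 ≤ i ∧ i ≤ n - 1 ∧ hhat = hstep x i) →
      ContDiffOn ℝ 4 f (Set.Icc (x 1) (x i0)) →
      (∀ t ∈ Set.Icc (x 1) (x i0),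
        |iteratedDerivWithin 4 f (Set.Icc (x 1) (x i0)) t| ≤ L) →
      (∀ j, 1 ≤ j → j ≤ i0 - 1 → hhat / hstep x j ≤ K) →
      (3 : ℝ) - Real.logb 2 hhat < (i0 : ℝ) →
      |derivWithin f (Set.Icc (x 1) (x i0)) (x i0) - ftil| ≤ T * hhat ^ p →
      df 1 = derivWithin f (Set.Icc (x 1) (x i0)) (x 1) →
      df i0 = ftil →
      (∀ j, 2 ≤ j → j ≤ i0 - 1 →
        lamb x (j - 1) * df (j - 1) + 2 * df j + mub x (j - 1) * df (j + 1)
          = 3 * (lamb x (j - 1) * mslope x f (j - 1) + mub x (j - 1) * mslope x f j)) →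
      (∀ i : ℕ, 2 ≤ i → (i : ℤ) ≤ ⌊(i0 : ℝ) - 2 + Real.logb 2 hhat⌋ + 1 →
        |df i - derivWithin f (Set.Icc (x 1) (x i0)) (x i)|
          ≤ C * hhat ^ (min 3 (p + 1))) ∧
      (∀ i : ℕ, ⌊(i0 : ℝ) - 2 + Real.logb 2 hhat⌋ + 1 < (i : ℤ) → i ≤ i0 - 1 →
        |df i - derivWithin f (Set.Icc (x 1) (x i0)) (x i)|
          ≤ C * hhat ^ (min 3 p)) := by
  refine ⟨|L| + T, by positivity, ?_⟩
  intro p _ n i0 x f ftil hhat df hi0 hi0n hx hhat1 hstep_le _ hf hL _ hi0big hftil hdf1 hdfi0 hrows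
  have hhat0 : 0 < hhat :=
    (sub_pos.2 (hx 1 le_rfl (by omega))).trans_le (hstep_le 1 le_rfl (by omega))
  have herr : ∀ i, 1 ≤ i → i ≤ i0 → |df i - derivWithin f (Icc (x 1) (x i0)) (x i)|
      ≤ |L| * hhat ^ 3 + T * hhat ^ p * 2 ^ (i + 1) / 2 ^ i0 := fun i hi₁ hi =>
    abs_sub_derivWithin_le_of_spline_rows (by omega) (fun j h1 h2 => hx j h1 (by omega))
      (fun j h1 h2 => hstep_le j h1 (by omega)) hf (fun t ht => (hL t ht).trans (le_abs_self L))
      hdf1 (by rwa [hdfi0, abs_sub_comm]) hrows hi₁ hi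
  have hC (q : ℝ) := add_mul_rpow_le_mul_rpow_min (q := q) (abs_nonneg L) hT.le hhat0 hhat1.le
  constructor
  · intro i hi₂ hil
    have h2 := two_pow_succ_le_of_le_floor_logb hhat0 hil
    have hi : i + 1 < i0 := (pow_lt_pow_iff_right₀ one_lt_two).1
      (h2.trans_lt (mul_lt_of_lt_one_right (by positivity) hhat1))
    calc _ ≤ |L| * hhat ^ 3 + T * hhat ^ p * 2 ^ (i + 1) / 2 ^ i0 := herr i (by omega) (by omega)
      _ ≤ |L| * hhat ^ 3 + T * hhat ^ (p + 1) := by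
        gcongr
        rw [div_le_iff₀ (by positivity), Real.rpow_add_one hhat0.ne']
        calc T * hhat ^ p * 2 ^ (i + 1) ≤ T * hhat ^ p * (2 ^ i0 * hhat) := by gcongr
          _ = _ := by ring
      _ ≤ _ := hC (p + 1)
  · intro i hil hi
    have hfl : 0 ≤ ⌊(i0 : ℝ) - 2 + Real.logb 2 hhat⌋ := Int.floor_nonneg.2 (by linarith)
    calc _ ≤ |L| * hhat ^ 3 + T * hhat ^ p * 2 ^ (i + 1) / 2 ^ i0 := herr i (by omega) (by omega)
      _ ≤ |L| * hhat ^ 3 + T * hhat ^ p := by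
        gcongr
        rw [div_le_iff₀ (by positivity)]
        gcongr
        · exact one_le_two
        · omega
      _ ≤ _ := hC p

/-- Accuracy of the derivative values obtained from the left subsystem
`A_{i₀⁻}·Ḟ = B_{i₀⁻}` (written row-wise, with boundary values `ḟ₁ = f'(x₁)`
and `ḟᵢ₀ = f̃ᵢ₀`): there is `C = C(K, L, T)` such that the error is
`C·ĥ^{min(3,p+1)}` for `2 ≤ i ≤ l₀` and `C·ĥ^{min(3,p)}` for
`l₀ < i ≤ i₀ − 1`, where `l₀ = ⌊(i₀ − 2) + log₂ ĥ⌋ + 1`. -/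
theorem left_subsystem_accuracy (K L T : ℝ) (hK : 0 < K) (hT : 0 < T) :
    ∃ C > 0, ∀ (p : ℝ), 0 < p →
      ∀ (n i0 : ℕ) (x : ℕ → ℝ) (f : ℝ → ℝ) (ftil hhat : ℝ) (df : ℕ → ℝ),
      3 ≤ i0 → i0 ≤ n - 1 →
      (∀ i, 1 ≤ i → i ≤ n - 1 → x i < x (i + 1)) →
      hhat < 1 →
      (∀ i, 1 ≤ i → i ≤ n - 1 → hstep x i ≤ hhat) →
      (∃ i, 1 ≤ i ∧ i ≤ n - 1 ∧ hhat = hstep x i) →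
      ContDiffOn ℝ 4 f (Set.Icc (x 1) (x i0)) →
      (∀ t ∈ Set.Icc (x 1) (x i0),
        |iteratedDerivWithin 4 f (Set.Icc (x 1) (x i0)) t| ≤ L) →
      (∀ j, 1 ≤ j → j ≤ i0 - 1 → hhat / hstep x j ≤ K) →
      (3 : ℝ) - Real.logb 2 hhat < (i0 : ℝ) →
      |derivWithin f (Set.Icc (x 1) (x i0)) (x i0) - ftil| ≤ T * hhat ^ p →
      df 1 = derivWithin f (Set.Icc (x 1) (x i0)) (x 1) →
      df i0 = ftil →
      (∀ j, 2 ≤ j → j ≤ i0 - 1 →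
        lamb x (j - 1) * df (j - 1) + 2 * df j + mub x (j - 1) * df (j + 1)
          = 3 * (lamb x (j - 1) * mslope x f (j - 1) + mub x (j - 1) * mslope x f j)) →
      (∀ i : ℕ, 2 ≤ i → (i : ℤ) ≤ ⌊(i0 : ℝ) - 2 + Real.logb 2 hhat⌋ + 1 →
        |df i - derivWithin f (Set.Icc (x 1) (x i0)) (x i)|
          ≤ C * hhat ^ (min 3 (p + 1))) ∧
      (∀ i : ℕ, ⌊(i0 : ℝ) - 2 + Real.logb 2 hhat⌋ + 1 < (i : ℤ) → i ≤ i0 - 1 →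
        |df i - derivWithin f (Set.Icc (x 1) (x i0)) (x i)|
          ≤ C * hhat ^ (min 3 p)) :=
  left_subsystem_accuracy_general K L T hT
end
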